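/- Let d₁,…,d_M be i.i.d. real random variables of the form dᵢ = zᵢ sin(θᵢ) with zᵢ i.i.d. (E[zᵢ²]=1, E[zᵢ⁴]=4) independent of θᵢ i.i.d. uniform on [-π/L, π/L]. Then E[(Σᵢ dᵢ²)²] = (M/(16π²))·(B - A), where A = 4π(3+M) L sin(2π/L) and B = L²(M-1) sin²(2π/L) + 2π(2(5+M)π + L sin(4π/L)). -/

import Mathlib

open MeasureTheory Real Set ProbabilityTheory

/-! The squares `dᵢ²` are independent, so expanding the square of their sum leaves
`M E[d⁴] + M(M-1) E[d²]²`. Since `zᵢ` and `θᵢ` are independent, `E[d^k] = E[z^k] E[sin^k θ]`,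
and the sine moments are elementary integrals of `sin²` and `sin⁴` against the uniform density. -/

lemma integral_sin_sq_neg_self (a : ℝ) : ∫ x in (-a)..a, sin x ^ 2 = a - sin (2 * a) / 2 := by
  rw [integral_sin_sq, sin_two_mul, sin_neg, cos_neg]
  ring

lemma integral_sin_pow_four_neg_self (a : ℝ) :
    ∫ x in (-a)..a, sin x ^ 4 = 3 * a / 4 - sin (2 * a) / 2 + sin (4 * a) / 16 := by
  rw [integral_sin_pow, integral_sin_sq_neg_self, sin_neg, cos_neg,
    show 4 * a = 2 * (2 * a) by ring, sin_two_mul (2 * a), sin_two_mul a, cos_two_mul a]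
  push_cast
  linear_combination (-(sin a * cos a / 2)) * sin_sq_add_cos_sq a

lemma integral_withDensity_indicator_const (g : ℝ → ℝ) {a b c : ℝ} (hab : a ≤ b) (hc : 0 ≤ c) :
    ∫ x, g x ∂(volume : Measure ℝ).withDensity
        (fun x => ENNReal.ofReal (indicator (Icc a b) (fun _ => c) x))
      = c * ∫ x in a..b, g x := by
  have hdens : (fun x => ENNReal.ofReal (indicator (Icc a b) (fun _ => c) x))
      = indicator (Icc a b) (fun _ => ENNReal.ofReal c) :=
    (indicator_comp_of_zero ENNReal.ofReal_zero).symm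
  rw [hdens, withDensity_indicator measurableSet_Icc, withDensity_const, integral_smul_measure,
    ENNReal.toReal_ofReal hc, integral_Icc_eq_integral_Ioc,
    ← intervalIntegral.integral_of_le hab, smul_eq_mul]

namespace ProbabilityTheory

variable {Ω : Type*} [MeasurableSpace Ω] {μ : Measure Ω}

lemma IndepFun.integral_mul_pow {X Y : Ω → ℝ} (h : IndepFun X Y μ) (hX : AEMeasurable X μ)
    (hY : AEMeasurable Y μ) (n : ℕ) :
    ∫ ω, (X ω * Y ω) ^ n ∂μ = (∫ ω, X ω ^ n ∂μ) * ∫ ω, Y ω ^ n ∂μ := by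
  simp_rw [mul_pow]
  exact h.integral_fun_comp_mul_comp (f := (· ^ n)) (g := (· ^ n)) hX hY
    (continuous_pow n).aestronglyMeasurable (continuous_pow n).aestronglyMeasurable

lemma IndepFun.integrable_mul_pow {X Y : Ω → ℝ} {n : ℕ} (h : IndepFun X Y μ)
    (hX : Integrable (fun ω => X ω ^ n) μ) (hY : Integrable (fun ω => Y ω ^ n) μ) :
    Integrable (fun ω => (X ω * Y ω) ^ n) μ := by
  simp_rw [mul_pow]
  exact (h.comp (measurable_id.pow_const n) (measurable_id.pow_const n)).integrable_mul hX hY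

lemma iIndepFun.indepFun_comp_sumElim {ι β γ : Type*} [MeasurableSpace β] [MeasurableSpace γ]
    {X Y : ι → Ω → β} (h : iIndepFun (Sum.elim X Y) μ) (hX : ∀ i, Measurable (X i))
    (hY : ∀ i, Measurable (Y i)) {f : β × β → γ} (hf : Measurable f) {i j : ι} (hij : i ≠ j) :
    IndepFun (fun ω => f (X i ω, Y i ω)) (fun ω => f (X j ω, Y j ω)) μ :=
  (h.indepFun_prodMk_prodMk (Sum.forall.2 ⟨hX, hY⟩) (.inl i) (.inr i) (.inl j) (.inr j)
    (by simpa using hij) Sum.inl_ne_inr Sum.inr_ne_inl (by simpa using hij)).comp hf hf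

lemma integral_sq_sum_of_pairwise_indepFun [IsFiniteMeasure μ] {ι : Type*} [Fintype ι]
    {D : ι → Ω → ℝ} (hindep : Pairwise fun i j => IndepFun (D i) (D j) μ)
    (hD : ∀ i, MemLp (D i) 2 μ) {m s : ℝ} (hm : ∀ i, ∫ ω, D i ω ∂μ = m)
    (hs : ∀ i, ∫ ω, D i ω ^ 2 ∂μ = s) :
    ∫ ω, (∑ i, D i ω) ^ 2 ∂μ
      = Fintype.card ι * s + Fintype.card ι * (Fintype.card ι - 1) * m ^ 2 := by
  classical
  have hterm : ∀ i j, Integrable (fun ω => D i ω * D j ω) μ ∧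
      ∫ ω, D i ω * D j ω ∂μ = if i = j then s else m ^ 2 := by
    intro i j
    rcases eq_or_ne i j with rfl | hij
    · simp_rw [← sq]
      exact ⟨(hD i).integrable_sq, by simp [hs]⟩
    · have hi := (hD i).integrable one_le_two
      have hj := (hD j).integrable one_le_two
      refine ⟨(hindep hij).integrable_mul hi hj, ?_⟩
      rw [(hindep hij).integral_fun_mul_eq_mul_integral hi.1 hj.1, if_neg hij, hm, hm, sq]
  calc ∫ ω, (∑ i, D i ω) ^ 2 ∂μ = ∫ ω, ∑ i, ∑ j, D i ω * D j ω ∂μ := by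
        simp_rw [sq, Finset.sum_mul_sum]
    _ = ∑ i, ∑ j, ∫ ω, D i ω * D j ω ∂μ := by
        rw [integral_finsetSum _ fun i _ => integrable_finsetSum _ fun j _ => (hterm i j).1]
        exact Finset.sum_congr rfl fun i _ => integral_finsetSum _ fun j _ => (hterm i j).1
    _ = ∑ i : ι, ∑ j : ι, if i = j then s else m ^ 2 := by
        simp_rw [fun i j => (hterm i j).2]
    _ = ∑ i : ι, ∑ j : ι, (m ^ 2 + if i = j then s - m ^ 2 else 0) := by
        congr! 2 with i _ j _
        split_ifs <;> ring
    _ = _ := by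
        simp only [Finset.sum_add_distrib, Finset.sum_ite_eq, Finset.mem_univ, if_true,
          Finset.sum_const, Finset.card_univ, nsmul_eq_mul]
        ring

end ProbabilityTheory

theorem fourth_moment_sum_squares_imag_general
    {Ω : Type*} [MeasurableSpace Ω] (μ : Measure Ω) [IsProbabilityMeasure μ]
    (M : ℕ) (L : ℝ) (hL : 2 ≤ L)
    (z θ : Fin M → Ω → ℝ) (hzm : ∀ i, Measurable (z i)) (hθm : ∀ i, Measurable (θ i))
    (hindep : iIndepFun (m := fun _ : Fin M ⊕ Fin M => (inferInstance : MeasurableSpace ℝ))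
      (Sum.elim z θ) μ)
    (hz2 : ∀ i, ∫ ω, (z i ω)^2 ∂μ = 1)
    (hz4 : ∀ i, ∫ ω, (z i ω)^4 ∂μ = 4)
    (hθd : ∀ i, Measure.map (θ i) μ = (volume : Measure ℝ).withDensity
      (fun x => ENNReal.ofReal (indicator (Icc (-(π/L)) (π/L)) (fun _ => L / (2*π)) x))) :
    ∫ ω, (∑ i, (z i ω * Real.sin (θ i ω))^2)^2 ∂μ
      = (M / (16 * π^2))
          * ((L^2 * (M - 1 : ℝ) * (Real.sin (2*π/L))^2
              + 2*π*(2*(5 + M : ℝ)*π + L * Real.sin (4*π/L)))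
            - 4*π*(3 + M : ℝ) * L * Real.sin (2*π/L)) := by
  have hL0 : 0 < L := by linarith
  have hsin : ∀ i n, ∫ ω, sin (θ i ω) ^ n ∂μ
      = L / (2 * π) * ∫ x in -(π / L)..π / L, sin x ^ n := fun i n => by
    rw [← integral_map (f := fun x => sin x ^ n) (hθm i).aemeasurable (by fun_prop), hθd i,
      integral_withDensity_indicator_const _ (by linarith [div_pos pi_pos hL0]) (by positivity)]
  have hzθ : ∀ i, IndepFun (z i) (fun ω => sin (θ i ω)) μ := fun i =>
    (hindep.indepFun Sum.inl_ne_inr).comp measurable_id measurable_sin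
  have hsin_int : ∀ i n, Integrable (fun ω => sin (θ i ω) ^ n) μ := fun i n =>
    .of_bound (by fun_prop) 1 (.of_forall fun ω => by
      simpa [abs_pow] using pow_le_one₀ (abs_nonneg _) (abs_sin_le_one (θ i ω)))
  have hD : ∀ i, MemLp (fun ω => (z i ω * sin (θ i ω)) ^ 2) 2 μ := fun i => by
    refine (memLp_two_iff_integrable_sq (by fun_prop)).2 ?_
    simp_rw [← pow_mul]
    exact (hzθ i).integrable_mul_pow (.of_integral_ne_zero (by norm_num [hz4])) (hsin_int i _)
  have hm : ∀ i, ∫ ω, (z i ω * sin (θ i ω)) ^ 2 ∂μ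
      = L / (2 * π) * (π / L - sin (2 * (π / L)) / 2) := fun i => by
    rw [(hzθ i).integral_mul_pow (hzm i).aemeasurable (by fun_prop), hz2, hsin,
      integral_sin_sq_neg_self, one_mul]
  have hs : ∀ i, ∫ ω, ((z i ω * sin (θ i ω)) ^ 2) ^ 2 ∂μ = 4 * (L / (2 * π) *
      (3 * (π / L) / 4 - sin (2 * (π / L)) / 2 + sin (4 * (π / L)) / 16)) := fun i => by
    simp_rw [← pow_mul]
    rw [(hzθ i).integral_mul_pow (hzm i).aemeasurable (by fun_prop), hz4, hsin,
      integral_sin_pow_four_neg_self]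
  rw [integral_sq_sum_of_pairwise_indepFun
    (fun i j hij => hindep.indepFun_comp_sumElim hzm hθm
      (f := fun p : ℝ × ℝ => (p.1 * sin p.2) ^ 2) (by fun_prop) hij) hD hm hs,
    Fintype.card_fin]
  field_simp
  ring

/-- With `dᵢ = zᵢ sin θᵢ`, `zᵢ` i.i.d. (`E[zᵢ²]=1`, `E[zᵢ⁴]=4`) independent of `θᵢ`
i.i.d. uniform on `[-π/L, π/L]`, one has `E[(Σᵢ dᵢ²)²] = (M/(16π²))(B - A)` with
`A = 4π(3+M) L sin(2π/L)` and
`B = L²(M-1) sin²(2π/L) + 2π(2(5+M)π + L sin(4π/L))`. -/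
theorem fourth_moment_sum_squares_imag
    {Ω : Type*} [MeasurableSpace Ω] (μ : Measure Ω) [IsProbabilityMeasure μ]
    (M : ℕ) (hM : 0 < M) (L : ℝ) (hL : 2 ≤ L)
    (z θ : Fin M → Ω → ℝ) (hzm : ∀ i, Measurable (z i)) (hθm : ∀ i, Measurable (θ i))
    (hznn : ∀ i ω, 0 ≤ z i ω)
    (hindep : iIndepFun (m := fun _ : Fin M ⊕ Fin M => (inferInstance : MeasurableSpace ℝ))
      (Sum.elim z θ) μ)
    (hzid : ∀ i j, Measure.map (z i) μ = Measure.map (z j) μ)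
    (hz2 : ∀ i, ∫ ω, (z i ω)^2 ∂μ = 1)
    (hz4 : ∀ i, ∫ ω, (z i ω)^4 ∂μ = 4)
    (hθd : ∀ i, Measure.map (θ i) μ = (volume : Measure ℝ).withDensity
      (fun x => ENNReal.ofReal (indicator (Icc (-(π/L)) (π/L)) (fun _ => L / (2*π)) x))) :
    ∫ ω, (∑ i, (z i ω * Real.sin (θ i ω))^2)^2 ∂μ
      = (M / (16 * π^2))
          * ((L^2 * (M - 1 : ℝ) * (Real.sin (2*π/L))^2
              + 2*π*(2*(5 + M : ℝ)*π + L * Real.sin (4*π/L)))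
            - 4*π*(3 + M : ℝ) * L * Real.sin (2*π/L)) :=
  fourth_moment_sum_squares_imag_general μ M L hL z θ hzm hθm hindep hz2 hz4 hθd
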